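/- arXiv:math/0510643 — 3 statements merged into one kernel-verified Lean document; each statement's English description precedes it below -/
import Mathlib

section
/- Let g be twice continuously differentiable on [1,∞) with β ≥ 0, satisfying g'' + (1 + βg²/ρ + 1/(4ρ²)) g = F, where ∫₁^∞ |F(τ)| dτ < ∞. Then the limit lim_{ρ→∞} (g'(ρ)² + g(ρ)²)^{1/2} exists, provided g and g' remain bounded. -/
/-!
Along a solution, the derivative of the modified energy
`E = g'² + g² + (β / (2ρ)) g⁴ + g² / (4ρ²)` is `2 g' F - β g⁴ / (2ρ²) - g² / (2ρ³)`: the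
correction terms cancel every term with a factor `g'` except `2 g' F`. With `g, g'` bounded this
derivative is dominated by an integrable function on `(1, ∞)`, so `E` converges, and the
corrections themselves tend to `0`.
-/

open MeasureTheory Filter Set Topology

theorem integrableOn_Ioi_inv_pow {c : ℝ} (hc : 0 < c) {n : ℕ} (hn : 2 ≤ n) :
    IntegrableOn (fun x : ℝ => (x ^ n)⁻¹) (Ioi c) := by
  refine (integrableOn_Ioi_rpow_of_lt (a := -n) (by norm_cast; omega) hc).congr_fun
    (fun x hx => ?_) measurableSet_Ioi
  simp only [Real.rpow_neg (hc.trans hx).le, Real.rpow_natCast]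

theorem exists_tendsto_of_hasDerivAt_of_abs_le {E E' b : ℝ → ℝ} {a : ℝ}
    (hderiv : ∀ x ∈ Ioi a, HasDerivAt E (E' x) x) (hbound : ∀ x ∈ Ioi a, |E' x| ≤ b x)
    (hb : IntegrableOn b (Ioi a)) : ∃ L, Tendsto E atTop (𝓝 L) := by
  have hderiv' : ∀ x ∈ Ioi a, HasDerivAt E (deriv E x) x := fun x hx =>
    (hderiv x hx).differentiableAt.hasDerivAt
  have hint : IntegrableOn (deriv E) (Ioi a) := by
    refine hb.mono' (measurable_deriv E).aestronglyMeasurable ?_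
    filter_upwards [ae_restrict_mem measurableSet_Ioi] with x hx
    rw [(hderiv x hx).deriv]
    exact hbound x hx
  exact ⟨_, tendsto_limUnder_of_hasDerivAt_of_integrableOn_Ioi hderiv' hint⟩

section ModifiedEnergy

variable (β : ℝ) (g : ℝ → ℝ)

noncomputable def energyCorrection (ρ : ℝ) : ℝ :=
  β / (2 * ρ) * g ρ ^ 4 + g ρ ^ 2 / (4 * ρ ^ 2)

noncomputable def modifiedEnergy (ρ : ℝ) : ℝ :=
  deriv g ρ ^ 2 + g ρ ^ 2 + energyCorrection β g ρ

variable {β g}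

theorem hasDerivAt_modifiedEnergy {ρ : ℝ} (hρ : ρ ≠ 0) (hg : DifferentiableAt ℝ g ρ)
    (hg' : DifferentiableAt ℝ (deriv g) ρ) :
    HasDerivAt (modifiedEnergy β g)
      (2 * deriv g ρ * (deriv (deriv g) ρ + (1 + β * g ρ ^ 2 / ρ + 1 / (4 * ρ ^ 2)) * g ρ)
        - β * g ρ ^ 4 / (2 * ρ ^ 2) - g ρ ^ 2 / (2 * ρ ^ 3)) ρ := by
  have h1 := hg.hasDerivAt
  have hcorr := (((hasDerivAt_inv hρ).const_mul (β / 2)).mul (h1.pow 4)).add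
    ((((hasDerivAt_pow 2 ρ).inv (pow_ne_zero 2 hρ)).const_mul (1 / 4)).mul (h1.pow 2))
  refine ((((hg'.hasDerivAt.pow 2).add (h1.pow 2)).add hcorr).congr_of_eventuallyEq
    (.of_forall fun x => ?_)).congr_deriv ?_
  · simp only [modifiedEnergy, energyCorrection, Pi.add_apply, Pi.mul_apply, Pi.pow_apply,
      Pi.inv_apply]
    ring
  · simp only [Pi.pow_apply, Pi.inv_apply]
    field_simp
    ring

theorem tendsto_energyCorrection_zero {B : ℝ} (hbdd : ∀ᶠ ρ in atTop, |g ρ| ≤ B) :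
    Tendsto (energyCorrection β g) atTop (𝓝 0) := by
  have hpow (n : ℕ) (c : ℝ) :
      IsBoundedUnder (· ≤ ·) atTop (fun ρ => ‖c * g ρ ^ n‖) :=
    isBoundedUnder_of_eventually_le (a := ‖c‖ * B ^ n) <| hbdd.mono fun ρ hρ => by
      rw [norm_mul, norm_pow, Real.norm_eq_abs (g ρ)]
      gcongr
  have hinv : Tendsto (fun ρ : ℝ => ρ⁻¹) atTop (𝓝 0) := tendsto_inv_atTop_zero
  have hinv2 : Tendsto (fun ρ : ℝ => (ρ ^ 2)⁻¹) atTop (𝓝 0) :=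
    tendsto_inv_atTop_zero.comp (tendsto_pow_atTop two_ne_zero)
  have hlim := (hinv.zero_mul_isBoundedUnder_le (hpow 4 (β / 2))).add
    (hinv2.zero_mul_isBoundedUnder_le (hpow 2 (1 / 4)))
  rw [add_zero] at hlim
  refine hlim.congr fun ρ => ?_
  simp only [energyCorrection]
  ring

end ModifiedEnergy

theorem abs_energyDeriv_le {x y φ β ρ B : ℝ} (hρ : 0 < ρ) (hx : |x| ≤ B) (hy : |y| ≤ B) :
    |2 * y * φ - β * x ^ 4 / (2 * ρ ^ 2) - x ^ 2 / (2 * ρ ^ 3)|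
      ≤ 2 * B * |φ| + |β| * B ^ 4 / 2 * (ρ ^ 2)⁻¹ + B ^ 2 / 2 * (ρ ^ 3)⁻¹ := by
  have hx2 : x ^ 2 ≤ B ^ 2 := sq_le_sq' (abs_le.mp hx).1 (abs_le.mp hx).2
  have hx4 : x ^ 4 ≤ B ^ 4 := by
    simpa only [← pow_mul] using pow_le_pow_left₀ (sq_nonneg x) hx2 2
  calc |2 * y * φ - β * x ^ 4 / (2 * ρ ^ 2) - x ^ 2 / (2 * ρ ^ 3)|
      ≤ |2 * y * φ| + |β * x ^ 4 / (2 * ρ ^ 2)| + |x ^ 2 / (2 * ρ ^ 3)| :=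
        (abs_sub _ _).trans (by gcongr; exact abs_sub _ _)
    _ = 2 * |y| * |φ| + |β| * x ^ 4 / 2 * (ρ ^ 2)⁻¹ + x ^ 2 / 2 * (ρ ^ 3)⁻¹ := by
        simp only [abs_mul, abs_div, abs_two, abs_pow, abs_of_pos hρ, sq_abs]
        rw [show |x| ^ 4 = x ^ 4 by rw [← abs_pow, abs_of_nonneg (by positivity)]]
        ring
    _ ≤ 2 * B * |φ| + |β| * B ^ 4 / 2 * (ρ ^ 2)⁻¹ + B ^ 2 / 2 * (ρ ^ 3)⁻¹ := by gcongr

theorem stmt_2_general (g F : ℝ → ℝ) (β : ℝ)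
    (hg : ContDiff ℝ 2 g)
    (hode : ∀ ρ ≥ (1:ℝ),
      deriv (deriv g) ρ + (1 + β * (g ρ)^2 / ρ + 1 / (4 * ρ^2)) * g ρ = F ρ)
    (hFint : MeasureTheory.IntegrableOn (fun τ => |F τ|) (Set.Ici 1))
    (B : ℝ) (hbdd : ∀ ρ ≥ (1:ℝ), |g ρ| ≤ B ∧ |deriv g ρ| ≤ B) :
    ∃ L : ℝ, Filter.Tendsto (fun ρ => Real.sqrt ((deriv g ρ)^2 + (g ρ)^2))
      Filter.atTop (nhds L) := by
  have hg' : Differentiable ℝ (deriv g) := by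
    simpa only [iteratedDeriv_one] using hg.differentiable_iteratedDeriv 1 (by norm_num)
  have hderiv : ∀ ρ ∈ Ioi (1 : ℝ), HasDerivAt (modifiedEnergy β g)
      (2 * deriv g ρ * F ρ - β * g ρ ^ 4 / (2 * ρ ^ 2) - g ρ ^ 2 / (2 * ρ ^ 3)) ρ :=
    fun ρ hρ => by
      rw [← hode ρ hρ.le]
      exact hasDerivAt_modifiedEnergy (zero_lt_one.trans hρ).ne'
        (hg.differentiable (by norm_num) ρ) (hg' ρ)
  have hb : IntegrableOn
      (fun ρ => 2 * B * |F ρ| + |β| * B ^ 4 / 2 * (ρ ^ 2)⁻¹ + B ^ 2 / 2 * (ρ ^ 3)⁻¹) (Ioi 1) :=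
    (((hFint.mono_set Ioi_subset_Ici_self).const_mul _).add
      ((integrableOn_Ioi_inv_pow one_pos le_rfl).const_mul _)).add
      ((integrableOn_Ioi_inv_pow one_pos (by norm_num)).const_mul _)
  obtain ⟨L, hL⟩ := exists_tendsto_of_hasDerivAt_of_abs_le hderiv (fun ρ hρ =>
    abs_energyDeriv_le (zero_lt_one.trans hρ) (hbdd ρ hρ.le).1 (hbdd ρ hρ.le).2) hb
  have hamp : Tendsto (fun ρ => deriv g ρ ^ 2 + g ρ ^ 2) atTop (𝓝 L) := by
    simpa [modifiedEnergy] using hL.sub (tendsto_energyCorrection_zero (β := β)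
      ((eventually_ge_atTop 1).mono fun ρ hρ => (hbdd ρ hρ).1))
  exact ⟨√L, (Real.continuous_sqrt.tendsto L).comp hamp⟩

/-- Convergence of the amplitude `(g'² + g²)^{1/2}` as `ρ → ∞`. -/
theorem stmt_2 (g F : ℝ → ℝ) (β : ℝ) (hβ : 0 ≤ β)
    (hg : ContDiff ℝ 2 g) (hF : Continuous F)
    (hode : ∀ ρ ≥ (1:ℝ),
      deriv (deriv g) ρ + (1 + β * (g ρ)^2 / ρ + 1 / (4 * ρ^2)) * g ρ = F ρ)
    (hFint : MeasureTheory.IntegrableOn (fun τ => |F τ|) (Set.Ici 1))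
    (B : ℝ) (hbdd : ∀ ρ ≥ (1:ℝ), |g ρ| ≤ B ∧ |deriv g ρ| ≤ B) :
    ∃ L : ℝ, Filter.Tendsto (fun ρ => Real.sqrt ((deriv g ρ)^2 + (g ρ)^2))
      Filter.atTop (nhds L) :=
  stmt_2_general g F β hg hode hFint B hbdd
end

section
/- Let V : ℝ → ℝ be twice continuously differentiable with compact support. Then (∫ |V'(y)|⁴ e^{|y|} dy)^{1/2} ≤ C (sup |V|) (∫ (|V''|² + |V'|² + |V|²) e^{|y|} dy)^{1/2} for an absolute constant C. -/
/-!
Let `w = e^{|y|}` and `A = ∫ V'³ w · V'`. Integrating by parts gives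
`A = -∫ V (3 V'² V'' w + V'³ w')`; the kink of `w` at `0` does no harm, since `V V'³ w` is
continuous, so the boundary terms of the two half-lines cancel there. As `|w'| ≤ w` and
`|V| ≤ M = sup |V|`, Young's inequality bounds the new integrand by
`(V'⁴ / 2 + 6 M² (V''² + V'²)) w`, so `A ≤ A / 2 + 6 M² ∫ (V''² + V'² + V²) w`; absorbing
`A / 2` gives `A ≤ 12 M² ∫ (V''² + V'² + V²) w`, whence the claim with `C = 4 ≥ √12`.
-/

open MeasureTheory Filter Topology

theorem HasCompactSupport.pow {α β : Type*} [TopologicalSpace α] [MonoidWithZero β]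
    {f : α → β} (hf : HasCompactSupport f) {n : ℕ} (hn : n ≠ 0) :
    HasCompactSupport fun x ↦ f x ^ n :=
  hf.comp_left (zero_pow hn)

theorem integral_of_hasDerivAt_off_of_tendsto {E : Type*} [NormedAddCommGroup E]
    [NormedSpace ℝ E] [CompleteSpace E] {f f' : ℝ → E} {a : ℝ} {m n : E}
    (hfa : ContinuousAt f a) (hderiv : ∀ x ≠ a, HasDerivAt f (f' x) x) (hf' : Integrable f')
    (hbot : Tendsto f atBot (𝓝 m)) (htop : Tendsto f atTop (𝓝 n)) :
    ∫ x, f' x = n - m := by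
  rw [← intervalIntegral.integral_Iic_add_Ioi (b := a) hf'.integrableOn hf'.integrableOn,
    integral_Iic_of_hasDerivAt_of_tendsto hfa.continuousWithinAt
      (fun x hx ↦ hderiv x hx.ne) hf'.integrableOn hbot,
    integral_Ioi_of_hasDerivAt_of_tendsto hfa.continuousWithinAt
      (fun x hx ↦ hderiv x hx.ne') hf'.integrableOn htop]
  abel

theorem mul_three_mul_sq_mul_add_pow_three_le {m a b : ℝ} (hm : 0 ≤ m) :
    m * (3 * a ^ 2 * |b| + |a| ^ 3) ≤ a ^ 4 / 2 + 6 * m ^ 2 * (b ^ 2 + a ^ 2) := by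
  nlinarith [sq_nonneg (a ^ 2 - 4 * m * |b|), sq_nonneg (a ^ 2 - 4 * m * |a|), sq_abs a, sq_abs b,
    mul_nonneg hm (abs_nonneg a)]

theorem abs_mul_three_mul_sq_mul_add_pow_three_le {m u a b s t : ℝ} (hu : |u| ≤ m)
    (ht : |t| ≤ s) :
    |u * (3 * a ^ 2 * b * s + a ^ 3 * t)| ≤ (a ^ 4 / 2 + 6 * m ^ 2 * (b ^ 2 + a ^ 2)) * s := by
  have hm : 0 ≤ m := (abs_nonneg u).trans hu
  have hs : 0 ≤ s := (abs_nonneg t).trans ht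
  calc |u * (3 * a ^ 2 * b * s + a ^ 3 * t)|
      ≤ m * (3 * a ^ 2 * |b| * s + |a| ^ 3 * s) := by
        rw [abs_mul]
        refine mul_le_mul hu ((abs_add_le _ _).trans ?_) (abs_nonneg _) hm
        simp only [abs_mul, abs_pow, sq_abs, abs_of_nonneg hs, Nat.abs_ofNat]
        gcongr
    _ = m * (3 * a ^ 2 * |b| + |a| ^ 3) * s := by ring
    _ ≤ _ := mul_le_mul_of_nonneg_right (mul_three_mul_sq_mul_add_pow_three_le hm) hs

section WeightedInterpolation

variable {V w : ℝ → ℝ} {a : ℝ}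

theorem integral_deriv_pow_four_mul_eq (hV : ContDiff ℝ 2 V) (hVc : HasCompactSupport V)
    (hw : Continuous w) (hwd : ∀ y ≠ a, DifferentiableAt ℝ w y)
    (hint : Integrable fun y ↦
      V y * (3 * deriv V y ^ 2 * deriv (deriv V) y * w y + deriv V y ^ 3 * deriv w y)) :
    ∫ y, deriv V y ^ 4 * w y =
      -∫ y, V y * (3 * deriv V y ^ 2 * deriv (deriv V) y * w y + deriv V y ^ 3 * deriv w y) := by
  have hV1 : Differentiable ℝ V := hV.differentiable two_ne_zero
  have hV2 : ContDiff ℝ 1 (deriv V) := (show ContDiff ℝ (1 + 1) V from hV).deriv'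
  have h4 : Integrable fun y ↦ deriv V y ^ 4 * w y :=
    ((hV2.continuous.pow 4).mul hw).integrable_of_hasCompactSupport
      (hVc.deriv.pow four_ne_zero).mul_right
  have hF : HasCompactSupport fun y ↦ V y * deriv V y ^ 3 * w y := hVc.mul_right.mul_right
  have hFTC := integral_of_hasDerivAt_off_of_tendsto (a := a)
    (f' := fun y ↦ deriv V y ^ 4 * w y +
      V y * (3 * deriv V y ^ 2 * deriv (deriv V) y * w y + deriv V y ^ 3 * deriv w y))
    ((hV1.continuous.mul (hV2.continuous.pow 3)).mul hw).continuousAt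
    (fun y hy ↦ by
      have := ((hV1 y).hasDerivAt.mul (((hV2.differentiable one_ne_zero) y).hasDerivAt.pow 3)).mul
        (hwd y hy).hasDerivAt
      refine this.congr_deriv ?_
      simp only [Pi.mul_apply, Pi.pow_apply, Nat.cast_ofNat]
      ring)
    (h4.add hint) (hF.is_zero_at_infty.mono_left atBot_le_cocompact)
    (hF.is_zero_at_infty.mono_left atTop_le_cocompact)
  rw [integral_add h4 hint, sub_self] at hFTC
  linarith

theorem integral_deriv_pow_four_mul_le {M : ℝ} (hV : ContDiff ℝ 2 V) (hVc : HasCompactSupport V)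
    (hM : ∀ y, |V y| ≤ M) (hw : Continuous w) (hwd : ∀ y ≠ a, DifferentiableAt ℝ w y)
    (hw' : ∀ y ≠ a, |deriv w y| ≤ w y) :
    ∫ y, deriv V y ^ 4 * w y ≤
      12 * M ^ 2 * ∫ y, (deriv (deriv V) y ^ 2 + deriv V y ^ 2 + V y ^ 2) * w y := by
  have hV2 : ContDiff ℝ 1 (deriv V) := (show ContDiff ℝ (1 + 1) V from hV).deriv'
  have hc0 : Continuous V := hV.continuous
  have hc1 : Continuous (deriv V) := hV2.continuous
  have hc2 : Continuous (deriv (deriv V)) := hV2.continuous_deriv le_rfl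
  have h4 : Integrable fun y ↦ deriv V y ^ 4 * w y :=
    ((hc1.pow 4).mul hw).integrable_of_hasCompactSupport (hVc.deriv.pow four_ne_zero).mul_right
  have h2 : Integrable fun y ↦ (deriv (deriv V) y ^ 2 + deriv V y ^ 2 + V y ^ 2) * w y :=
    (((hc2.pow 2).add (hc1.pow 2)).add (hc0.pow 2)).mul hw |>.integrable_of_hasCompactSupport
      (((hVc.deriv.deriv.pow two_ne_zero).add (hVc.deriv.pow two_ne_zero)).add
        (hVc.pow two_ne_zero)).mul_right
  set G := fun y ↦
    V y * (3 * deriv V y ^ 2 * deriv (deriv V) y * w y + deriv V y ^ 3 * deriv w y)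
  have hG_le : ∀ᵐ y, ‖G y‖ ≤ deriv V y ^ 4 * w y / 2 +
      6 * M ^ 2 * ((deriv (deriv V) y ^ 2 + deriv V y ^ 2 + V y ^ 2) * w y) := by
    filter_upwards [Measure.ae_ne volume a] with y hy
    have hwy : 0 ≤ w y := (abs_nonneg _).trans (hw' y hy)
    refine (abs_mul_three_mul_sq_mul_add_pow_three_le (hM y) (hw' y hy)).trans ?_
    nlinarith [mul_nonneg (mul_nonneg (sq_nonneg M) (sq_nonneg (V y))) hwy]
  have hP := (h4.div_const 2).add (h2.const_mul (6 * M ^ 2))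
  have hG : Integrable G := by
    refine hP.mono' (Measurable.aestronglyMeasurable ?_) hG_le
    have := measurable_deriv w
    fun_prop
  have hA : ∫ y, deriv V y ^ 4 * w y ≤ (∫ y, deriv V y ^ 4 * w y) / 2 +
      6 * M ^ 2 * ∫ y, (deriv (deriv V) y ^ 2 + deriv V y ^ 2 + V y ^ 2) * w y :=
    calc ∫ y, deriv V y ^ 4 * w y = -∫ y, G y := integral_deriv_pow_four_mul_eq hV hVc hw hwd hG
      _ ≤ ∫ y, (deriv V y ^ 4 * w y / 2 +
            6 * M ^ 2 * ((deriv (deriv V) y ^ 2 + deriv V y ^ 2 + V y ^ 2) * w y)) :=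
        (neg_le_abs _).trans <| abs_integral_le_integral_abs.trans <|
          integral_mono_ae hG.abs hP hG_le
      _ = _ := by
        rw [integral_add (h4.div_const 2) (h2.const_mul _), integral_div, integral_const_mul]
  linarith

end WeightedInterpolation

theorem abs_deriv_exp_abs_le {y : ℝ} (hy : y ≠ 0) :
    |deriv (fun y ↦ Real.exp |y|) y| ≤ Real.exp |y| := by
  rw [(hasDerivAt_abs hy).exp.deriv, abs_mul, abs_of_pos (Real.exp_pos _)]
  refine mul_le_of_le_one_right (Real.exp_pos _).le ?_
  rcases hy.lt_or_gt with h | h <;> simp [h]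

/-- Weighted interpolation (Gagliardo–Nirenberg) inequality with weight `e^{|y|}`. -/
theorem stmt_9 : ∃ C : ℝ, 0 < C ∧ ∀ V : ℝ → ℝ, ContDiff ℝ 2 V → HasCompactSupport V →
    Real.sqrt (∫ y, |deriv V y|^4 * Real.exp |y|) ≤
      C * (⨆ y, |V y|) *
        Real.sqrt (∫ y, (|deriv (deriv V) y|^2 + |deriv V y|^2 + |V y|^2) * Real.exp |y|) := by
  refine ⟨4, four_pos, fun V hV hVc ↦ ?_⟩
  set M := ⨆ y, |V y|
  have hM : ∀ y, |V y| ≤ M :=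
    le_ciSup (hV.continuous.abs.bddAbove_range_of_hasCompactSupport hVc.abs)
  have hM0 : 0 ≤ M := (abs_nonneg _).trans (hM 0)
  have hA := integral_deriv_pow_four_mul_le hV hVc hM (by fun_prop)
    (fun y hy ↦ (hasDerivAt_abs hy).exp.differentiableAt) (fun y ↦ abs_deriv_exp_abs_le)
  simp only [Even.pow_abs (by decide : Even 4), sq_abs]
  set S := ∫ y, (deriv (deriv V) y ^ 2 + deriv V y ^ 2 + V y ^ 2) * Real.exp |y|
  have hS : 0 ≤ S := integral_nonneg fun y ↦ by positivity
  calc √(∫ y, deriv V y ^ 4 * Real.exp |y|) ≤ √((4 * M) ^ 2 * S) :=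
        Real.sqrt_le_sqrt (by nlinarith [mul_nonneg (sq_nonneg M) hS])
    _ = 4 * M * √S := by rw [Real.sqrt_mul (sq_nonneg _), Real.sqrt_sq (by positivity)]
end

section
/- Suppose V : [1,∞) → ℝ is twice differentiable, satisfies V'' + V + (β/ρ)V³ + V/(4ρ²) = F, and let V_± = e^{∓iρ}(V' ± iV). Then V_± satisfy the first-order system ∂ρ V_± ∓ i g V_± = F_± + e^{∓iρ} F, where g = (3β/(8ρ)) |V_+|² + 1/(8ρ²) and F_± = ± (β/(8iρ))(e^{±2iρ} V_±³ − e^{∓4iρ} V_∓³ + 3 e^{∓2iρ} |V_+|² V_∓) ∓ (i e^{∓2iρ}/(8ρ²)) V_∓. -/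
/-!
Writing `e = exp(-iρ)`, one has `(e (V' + iV))' = e (V'' + V)`, so the linear part of the equation
is absorbed by the phase rotation and only `(β/ρ)V³ + V/(4ρ²)` remains. Substituting
`V = (e⁻¹V₊ - eV₋)/(2i)` and `|V₊|² = V₊V₋` turns it into a polynomial in `V_±`, whose
non-oscillating part `|V₊|²V₊` is moved into the phase correction `g`. Conjugation exchanges `V₊`
and `V₋`, so both equations are the same computation, with `i = I` and with `i = -I`.
-/

open Complex ComplexConjugate

theorem hasDerivAt_cexp_neg_mul_mul_add {u w : ℝ → ℂ} {w' : ℂ} {ρ : ℝ} (c : ℂ)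
    (hu : HasDerivAt u (w ρ) ρ) (hw : HasDerivAt w w' ρ) :
    HasDerivAt (fun t : ℝ => exp (-c * t) * (w t + c * u t))
      (exp (-c * ρ) * (w' - c ^ 2 * u ρ)) ρ := by
  have hexp : HasDerivAt (fun t : ℝ => exp (-c * t)) (exp (-c * ρ) * -c) ρ := by
    simpa using ((ofRealCLM.hasDerivAt (x := ρ)).const_mul (-c)).cexp
  exact (hexp.mul (hw.add (hu.const_mul c))).congr_deriv (by simp only [Pi.add_apply]; ring)

noncomputable def phaseRotated (i : ℂ) (V : ℝ → ℝ) (ρ : ℝ) : ℂ :=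
  exp (-i * ρ) * (deriv V ρ + i * V ρ)

theorem hasDerivAt_phaseRotated {V : ℝ → ℝ} {ρ : ℝ} {i : ℂ} (hi : i ^ 2 = -1)
    (hV : DifferentiableAt ℝ V ρ) (hV' : DifferentiableAt ℝ (deriv V) ρ) :
    HasDerivAt (phaseRotated i V) (exp (-i * ρ) * (deriv (deriv V) ρ + V ρ)) ρ := by
  have := hasDerivAt_cexp_neg_mul_mul_add i hV.hasDerivAt.ofReal_comp hV'.hasDerivAt.ofReal_comp
  rwa [hi, neg_one_mul, sub_neg_eq_add] at this

theorem conj_phaseRotated (i : ℂ) (V : ℝ → ℝ) (ρ : ℝ) :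
    conj (phaseRotated i V ρ) = phaseRotated (conj i) V ρ := by
  simp [phaseRotated, ← exp_conj]

theorem phaseRotated_mul_conj (i : ℂ) (V : ℝ → ℝ) (ρ : ℝ) :
    phaseRotated i V ρ * phaseRotated (conj i) V ρ = (‖phaseRotated i V ρ‖ ^ 2 : ℝ) := by
  rw [← conj_phaseRotated, mul_conj, normSq_eq_norm_sq]

theorem cubic_phase_identity {K : Type*} [Field K] [CharZero K] {i e a p m β ρ : K}
    (hi : i ^ 2 = -1) (he : e ≠ 0) (hρ : ρ ≠ 0) (ha : 2 * i * a = e⁻¹ * p - e * m) :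
    -e * (β / ρ * a ^ 3 + a / (4 * ρ ^ 2)) - i * (3 * β / (8 * ρ) * (p * m) + 1 / (8 * ρ ^ 2)) * p
      = β / (8 * i * ρ) * (e⁻¹ ^ 2 * p ^ 3 - e ^ 4 * m ^ 3 + 3 * e ^ 2 * (p * m) * m)
        - i * e ^ 2 / (8 * ρ ^ 2) * m := by
  have hi0 : i ≠ 0 := by rintro rfl; norm_num at hi
  have ha' : a = -i * (e⁻¹ * p - e * m) / 2 := by linear_combination (-i / 2) * ha + a * hi
  subst ha'
  field_simp
  grind

theorem deriv_phaseRotated_eq_of_ode {V F : ℝ → ℝ} {β ρ : ℝ} {i : ℂ} (hi : i ^ 2 = -1)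
    (hρ : ρ ≠ 0) (hV : DifferentiableAt ℝ V ρ) (hV' : DifferentiableAt ℝ (deriv V) ρ)
    (hode : deriv (deriv V) ρ + V ρ + (β / ρ) * (V ρ) ^ 3 + V ρ / (4 * ρ ^ 2) = F ρ) :
    deriv (phaseRotated i V) ρ - i * (3 * β / (8 * ρ) * (phaseRotated i V ρ * phaseRotated (-i) V ρ)
        + 1 / (8 * ρ ^ 2)) * phaseRotated i V ρ
      = β / (8 * i * ρ) * (exp (2 * i * ρ) * phaseRotated i V ρ ^ 3
          - exp (-4 * i * ρ) * phaseRotated (-i) V ρ ^ 3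
          + 3 * exp (-2 * i * ρ) * (phaseRotated i V ρ * phaseRotated (-i) V ρ)
            * phaseRotated (-i) V ρ)
        - i * exp (-2 * i * ρ) / (8 * ρ ^ 2) * phaseRotated (-i) V ρ + exp (-i * ρ) * F ρ := by
  set e := exp (-i * ρ)
  have he : e ≠ 0 := exp_ne_zero _
  have he2 : exp (2 * i * ρ) = e⁻¹ ^ 2 := by
    rw [← exp_neg, ← exp_nat_mul]; congr 1; push_cast; ring
  have he4 : exp (-4 * i * ρ) = e ^ 4 := by
    rw [← exp_nat_mul]; congr 1; push_cast; ring
  have he2' : exp (-2 * i * ρ) = e ^ 2 := by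
    rw [← exp_nat_mul]; congr 1; push_cast; ring
  have hm : phaseRotated (-i) V ρ = e⁻¹ * (deriv V ρ - i * V ρ) := by
    simp only [phaseRotated, e, ← exp_neg, neg_mul, neg_neg, sub_eq_add_neg]
  have hinv : 2 * i * V ρ = e⁻¹ * phaseRotated i V ρ - e * phaseRotated (-i) V ρ := by
    have hp : phaseRotated i V ρ = e * (deriv V ρ + i * V ρ) := rfl
    rw [hm, hp]; field_simp; ring
  have hodeC : ((deriv (deriv V) ρ : ℝ) : ℂ) + V ρ + (β / ρ) * (V ρ : ℂ) ^ 3 + V ρ / (4 * ρ ^ 2)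
      = F ρ := by
    exact_mod_cast hode
  rw [(hasDerivAt_phaseRotated hi hV hV').deriv, he2, he4, he2']
  linear_combination
    cubic_phase_identity (β := (β : ℂ)) hi he (ofReal_ne_zero.mpr hρ) hinv + e * hodeC

/-- Reduction of the cubic second-order ODE to a first-order complex system. -/
theorem stmt_14 (V F : ℝ → ℝ) (β : ℝ)
    (hV : Differentiable ℝ V) (hV' : Differentiable ℝ (deriv V))
    (hode : ∀ ρ ≥ (1:ℝ),
      deriv (deriv V) ρ + V ρ + (β / ρ) * (V ρ)^3 + V ρ / (4 * ρ^2) = F ρ)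
    (Vp Vm : ℝ → ℂ)
    (hVp : ∀ ρ, Vp ρ = Complex.exp (-Complex.I * ρ) * ((Complex.ofReal (deriv V ρ)) + Complex.I * (Complex.ofReal (V ρ))))
    (hVm : ∀ ρ, Vm ρ = Complex.exp (Complex.I * ρ) * ((Complex.ofReal (deriv V ρ)) - Complex.I * (Complex.ofReal (V ρ))))
    (g : ℝ → ℝ)
    (hg : ∀ ρ, g ρ = (3 * β / (8 * ρ)) * (‖Vp ρ‖)^2 + 1 / (8 * ρ^2))
    (Fp Fm : ℝ → ℂ)
    (hFp : ∀ ρ, Fp ρ = (β / (8 * Complex.I * ρ)) *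
        (Complex.exp (2 * Complex.I * ρ) * (Vp ρ)^3
          - Complex.exp (-4 * Complex.I * ρ) * (Vm ρ)^3
          + 3 * Complex.exp (-2 * Complex.I * ρ) * ((‖Vp ρ‖)^2 : ℝ) * Vm ρ)
        - (Complex.I * Complex.exp (-2 * Complex.I * ρ) / (8 * ρ^2)) * Vm ρ)
    (hFm : ∀ ρ, Fm ρ = -(β / (8 * Complex.I * ρ)) *
        (Complex.exp (-2 * Complex.I * ρ) * (Vm ρ)^3
          - Complex.exp (4 * Complex.I * ρ) * (Vp ρ)^3
          + 3 * Complex.exp (2 * Complex.I * ρ) * ((‖Vp ρ‖)^2 : ℝ) * Vp ρ)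
        + (Complex.I * Complex.exp (2 * Complex.I * ρ) / (8 * ρ^2)) * Vp ρ) :
    ∀ ρ ≥ (1:ℝ),
      deriv Vp ρ - Complex.I * (g ρ : ℂ) * Vp ρ
          = Fp ρ + Complex.exp (-Complex.I * ρ) * (F ρ : ℂ) ∧
      deriv Vm ρ + Complex.I * (g ρ : ℂ) * Vm ρ
          = Fm ρ + Complex.exp (Complex.I * ρ) * (F ρ : ℂ) := by
  obtain rfl : Vp = phaseRotated I V := funext hVp
  obtain rfl : Vm = phaseRotated (-I) V :=
    funext fun ρ => by simp only [hVm, phaseRotated, neg_mul, neg_neg, sub_eq_add_neg]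
  intro ρ hρ
  have hρ0 : ρ ≠ 0 := by positivity
  have hN : ((‖phaseRotated I V ρ‖ ^ 2 : ℝ) : ℂ) = phaseRotated I V ρ * phaseRotated (-I) V ρ := by
    rw [← conj_I, phaseRotated_mul_conj]
  have hgC : (g ρ : ℂ) = 3 * β / (8 * ρ) * (phaseRotated I V ρ * phaseRotated (-I) V ρ)
      + 1 / (8 * ρ ^ 2) := by
    rw [hg, ← hN]; push_cast; ring
  have hplus := deriv_phaseRotated_eq_of_ode I_sq hρ0 (hV ρ) (hV' ρ) (hode ρ hρ)
  have hminus := deriv_phaseRotated_eq_of_ode (i := -I) (by rw [neg_sq, I_sq]) hρ0 (hV ρ) (hV' ρ)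
    (hode ρ hρ)
  rw [neg_neg] at hminus
  rw [hgC, hFp, hFm, hN]
  simp only [neg_mul, mul_neg, neg_neg] at hplus hminus ⊢
  constructor
  · linear_combination hplus
  · linear_combination hminus
end
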